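/- arXiv:0912.1788 — 5 statements merged into one kernel-verified Lean document; each statement's English description precedes it below -/
import Mathlib

section
/- The functions H_1(z,p) = ½⟨z,Bz⟩ and H_2(z,p) = ½⟨z,z⟩ − ⟨Bz,p⟩ and J_1 = ⟨p,p⟩ and J_2 = 2⟨z,p⟩ − ⟨Bp,p⟩ are all first integrals of the system ż = z × Bz − Bp × Bz, ṗ = p × Bz on ℝ⁶, where B = diag(b_1,b_2,b_3). -/
/-! Write the system as `ż = (z - Bp) × Bz`, `ṗ = p × Bz`. Since `B` is symmetric, the time
derivative of each of the four functions reduces to triple products with a repeated factor,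
e.g. `Ḣ₂ = ⟨ż, z - Bp⟩ - ⟨Bz, p × Bz⟩` and `J̇₂ = 2 (⟨(z - Bp) × Bz, p⟩ + ⟨z - Bp, p × Bz⟩)`,
so all four derivatives vanish identically. -/

open Matrix

theorem HasDerivAt.dotProduct {𝕜 𝔸 ι : Type*} [NontriviallyNormedField 𝕜] [NormedCommRing 𝔸]
    [NormedAlgebra 𝕜 𝔸] [Fintype ι] {f g : 𝕜 → ι → 𝔸} {f' g' : ι → 𝔸} {t : 𝕜}
    (hf : HasDerivAt f f' t) (hg : HasDerivAt g g' t) :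
    HasDerivAt (fun u => f u ⬝ᵥ g u) (f' ⬝ᵥ g t + f t ⬝ᵥ g') t := by
  simp only [_root_.dotProduct, ← Finset.sum_add_distrib]
  exact HasDerivAt.fun_sum fun i _ => (hasDerivAt_pi.mp hf i).mul (hasDerivAt_pi.mp hg i)

theorem mul_dotProduct_comm {α ι : Type*} [CommSemiring α] [Fintype ι] (b u v : ι → α) :
    (b * u) ⬝ᵥ v = u ⬝ᵥ (b * v) :=
  Finset.sum_congr rfl fun i _ => by simp only [Pi.mul_apply]; ring

theorem is_const_of_hasDerivAt_zero {𝕜 G : Type*} [RCLike 𝕜] [NormedAddCommGroup G]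
    [NormedSpace 𝕜 G] {f : 𝕜 → G} (h : ∀ t, HasDerivAt f 0 t) (s t : 𝕜) : f s = f t :=
  is_const_of_deriv_eq_zero (fun x => (h x).differentiableAt) (fun x => (h x).deriv) s t

section Steklov

variable {b : Fin 3 → ℝ} {z p : ℝ → Fin 3 → ℝ} {t : ℝ}

theorem steklov_hasDerivAt_H₁ (hz : HasDerivAt z ((z t - b * p t) ⨯₃ (b * z t)) t) :
    HasDerivAt (fun u => 1 / 2 * (z u ⬝ᵥ (b * z u))) 0 t := by
  refine ((hz.dotProduct (hz.const_mul b)).const_mul (1 / 2 : ℝ)).congr_deriv ?_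
  set ż := (z t - b * p t) ⨯₃ (b * z t)
  linear_combination -(mul_dotProduct_comm b (z t) ż + dotProduct_comm (b * z t) ż) / 2
    + dot_cross_self (z t - b * p t) (b * z t)

theorem steklov_hasDerivAt_H₂ (hz : HasDerivAt z ((z t - b * p t) ⨯₃ (b * z t)) t)
    (hp : HasDerivAt p (p t ⨯₃ (b * z t)) t) :
    HasDerivAt (fun u => 1 / 2 * (z u ⬝ᵥ z u) - (b * z u) ⬝ᵥ p u) 0 t := by
  refine (((hz.dotProduct hz).const_mul (1 / 2 : ℝ)).sub
    ((hz.const_mul b).dotProduct hp)).congr_deriv ?_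
  set w := z t - b * p t
  have hw : (w ⨯₃ (b * z t)) ⬝ᵥ z t - (w ⨯₃ (b * z t)) ⬝ᵥ (b * p t) = 0 := by
    rw [← dotProduct_sub, dotProduct_comm, dot_self_cross]
  linear_combination (dotProduct_comm (z t) (w ⨯₃ (b * z t))) / 2
    - mul_dotProduct_comm b (w ⨯₃ (b * z t)) (p t) - dot_cross_self (p t) (b * z t) + hw

theorem steklov_hasDerivAt_J₁ (hp : HasDerivAt p (p t ⨯₃ (b * z t)) t) :
    HasDerivAt (fun u => p u ⬝ᵥ p u) 0 t := by
  refine (hp.dotProduct hp).congr_deriv ?_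
  rw [dotProduct_comm _ (p t), dot_self_cross, add_zero]

theorem steklov_hasDerivAt_J₂ (hz : HasDerivAt z ((z t - b * p t) ⨯₃ (b * z t)) t)
    (hp : HasDerivAt p (p t ⨯₃ (b * z t)) t) :
    HasDerivAt (fun u => 2 * (z u ⬝ᵥ p u) - (b * p u) ⬝ᵥ p u) 0 t := by
  refine (((hz.dotProduct hp).const_mul (2 : ℝ)).sub
    ((hp.const_mul b).dotProduct hp)).congr_deriv ?_
  set w := z t - b * p t
  set c := b * z t
  have hw : (w ⨯₃ c) ⬝ᵥ p t + w ⬝ᵥ (p t ⨯₃ c) = 0 := by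
    rw [dotProduct_comm, triple_product_permutation, ← cross_anticomm c, dotProduct_neg,
      add_neg_cancel]
  linear_combination 2 * hw - 2 * sub_dotProduct (z t) (b * p t) (p t ⨯₃ c)
    - mul_dotProduct_comm b (p t ⨯₃ c) (p t) - dotProduct_comm (p t ⨯₃ c) (b * p t)

end Steklov

/-- The functions `H₁ = ½⟨z,Bz⟩`, `H₂ = ½⟨z,z⟩ - ⟨Bz,p⟩`, `J₁ = ⟨p,p⟩` and
`J₂ = 2⟨z,p⟩ - ⟨Bp,p⟩` are first integrals of the Steklov system
`ż = z × Bz - Bp × Bz`, `ṗ = p × Bz` on `ℝ⁶`, where `B = diag (b₁,b₂,b₃)`. -/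
theorem steklov_first_integrals (b : Fin 3 → ℝ) (z p : ℝ → Fin 3 → ℝ)
    (hz : ∀ t, HasDerivAt z
      (crossProduct (z t) (fun i => b i * z t i)
        - crossProduct (fun i => b i * p t i) (fun i => b i * z t i)) t)
    (hp : ∀ t, HasDerivAt p (crossProduct (p t) (fun i => b i * z t i)) t)
    (t : ℝ) :
    ((1 / 2) * ∑ i, z t i * (b i * z t i) = (1 / 2) * ∑ i, z 0 i * (b i * z 0 i))
    ∧ ((1 / 2) * (∑ i, z t i * z t i) - ∑ i, (b i * z t i) * p t i
        = (1 / 2) * (∑ i, z 0 i * z 0 i) - ∑ i, (b i * z 0 i) * p 0 i)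
    ∧ (∑ i, p t i * p t i = ∑ i, p 0 i * p 0 i)
    ∧ (2 * (∑ i, z t i * p t i) - ∑ i, (b i * p t i) * p t i
        = 2 * (∑ i, z 0 i * p 0 i) - ∑ i, (b i * p 0 i) * p 0 i) := by
  have hz' (s : ℝ) : HasDerivAt z ((z s - b * p s) ⨯₃ (b * z s)) s := by
    rw [LinearMap.map_sub₂]
    exact hz s
  exact ⟨is_const_of_hasDerivAt_zero (fun s => steklov_hasDerivAt_H₁ (hz' s)) t 0,
    is_const_of_hasDerivAt_zero (fun s => steklov_hasDerivAt_H₂ (hz' s) (hp s)) t 0,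
    is_const_of_hasDerivAt_zero (fun s => steklov_hasDerivAt_J₁ (hp s)) t 0,
    is_const_of_hasDerivAt_zero (fun s => steklov_hasDerivAt_J₂ (hz' s) (hp s)) t 0⟩
end

section
/- With x_i as above and c ∈ ℂ, the vector V with components V_i = x_i·(√(Φ(λ_1)(λ_2−c))/(λ_1−b_i) + √(Φ(λ_2)(λ_1−c))/(λ_2−b_i)), where Φ(λ) = (λ−b_1)(λ−b_2)(λ−b_3), satisfies Σ_i (c−b_i)V_i² = 0 and Σ_i V_i x_i = 0 (under the symbolic rule √(ab)√(ac) = a√(bc)). -/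
/-!
Write `Φ(λ) = (λ - b₁)(λ - b₂)(λ - b₃)`, so that `xᵢ² = (l₁ - bᵢ)(l₂ - bᵢ) / Φ'(bᵢ)`. Both
identities are instances of the partial-fraction expansion of `f / Φ` at the three nodes:
`∑ᵢ f(bᵢ) / Φ'(bᵢ) = 0` for `deg f ≤ 1`, and `∑ᵢ f(bᵢ) / (Φ'(bᵢ)(z - bᵢ)) = f(z) / Φ(z)` for
`deg f ≤ 2`. For `∑ Vᵢ xᵢ` the numerators are linear in `bᵢ`. Expanding `Vᵢ²`, the square terms
become `(l₂ - c)(c - l₁)(l₂ - l₁)` and `(l₁ - c)(c - l₂)(l₁ - l₂)`, which cancel, and the cross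
term is `2 u₁t₂u₂t₁ ∑ᵢ (c - bᵢ) / Φ'(bᵢ) = 0`.
-/

open Polynomial

section ThreeNodes

variable {K : Type*} [Field K] {b₁ b₂ b₃ : K}

theorem sum_eval_div_nodal_deriv_eq_zero (h12 : b₁ ≠ b₂) (h23 : b₂ ≠ b₃) (h31 : b₃ ≠ b₁)
    {f : K[X]} (hf : f.natDegree ≤ 1) :
    f.eval b₁ / ((b₁ - b₂) * (b₁ - b₃)) + f.eval b₂ / ((b₂ - b₃) * (b₂ - b₁))
      + f.eval b₃ / ((b₃ - b₁) * (b₃ - b₂)) = 0 := by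
  simp only [eval_eq_sum_range' (Nat.lt_succ_of_le hf), Finset.sum_range_succ,
    Finset.sum_range_zero]
  field_simp
  ring

theorem sum_partial_fractions_eq_eval_div_nodal (h12 : b₁ ≠ b₂) (h23 : b₂ ≠ b₃) (h31 : b₃ ≠ b₁)
    {f : K[X]} (hf : f.natDegree ≤ 2) {z : K} (hz₁ : z ≠ b₁) (hz₂ : z ≠ b₂) (hz₃ : z ≠ b₃) :
    f.eval b₁ / ((b₁ - b₂) * (b₁ - b₃) * (z - b₁))
      + f.eval b₂ / ((b₂ - b₃) * (b₂ - b₁) * (z - b₂))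
      + f.eval b₃ / ((b₃ - b₁) * (b₃ - b₂) * (z - b₃))
      = f.eval z / ((z - b₁) * (z - b₂) * (z - b₃)) := by
  simp only [eval_eq_sum_range' (Nat.lt_succ_of_le hf), Finset.sum_range_succ,
    Finset.sum_range_zero]
  field_simp
  ring

variable {l₁ l₂ : K}

theorem focal_sum_eq_zero (h12 : b₁ ≠ b₂) (h23 : b₂ ≠ b₃) (h31 : b₃ ≠ b₁)
    (h₁₁ : l₁ ≠ b₁) (h₁₂ : l₁ ≠ b₂) (h₁₃ : l₁ ≠ b₃)
    (h₂₁ : l₂ ≠ b₁) (h₂₂ : l₂ ≠ b₂) (h₂₃ : l₂ ≠ b₃) (P Q : K) :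
    (l₁ - b₁) * (l₂ - b₁) / ((b₁ - b₂) * (b₁ - b₃)) * (P / (l₁ - b₁) + Q / (l₂ - b₁))
      + (l₁ - b₂) * (l₂ - b₂) / ((b₂ - b₃) * (b₂ - b₁)) * (P / (l₁ - b₂) + Q / (l₂ - b₂))
      + (l₁ - b₃) * (l₂ - b₃) / ((b₃ - b₁) * (b₃ - b₂)) * (P / (l₁ - b₃) + Q / (l₂ - b₃))
      = 0 := by
  have h := sum_eval_div_nodal_deriv_eq_zero h12 h23 h31
    (f := C P * (C l₂ - X) + C Q * (C l₁ - X)) (by compute_degree!)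
  simp only [eval_add, eval_mul, eval_sub, eval_C, eval_X] at h
  rw [← h]
  field_simp

theorem tangency_sum_eq_zero (h12 : b₁ ≠ b₂) (h23 : b₂ ≠ b₃) (h31 : b₃ ≠ b₁)
    (h₁₁ : l₁ ≠ b₁) (h₁₂ : l₁ ≠ b₂) (h₁₃ : l₁ ≠ b₃)
    (h₂₁ : l₂ ≠ b₁) (h₂₂ : l₂ ≠ b₂) (h₂₃ : l₂ ≠ b₃) (c P Q : K)
    (hP : P ^ 2 = (l₁ - b₁) * (l₁ - b₂) * (l₁ - b₃) * (l₂ - c))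
    (hQ : Q ^ 2 = (l₂ - b₁) * (l₂ - b₂) * (l₂ - b₃) * (l₁ - c)) :
    (c - b₁) * ((l₁ - b₁) * (l₂ - b₁) / ((b₁ - b₂) * (b₁ - b₃))
        * (P / (l₁ - b₁) + Q / (l₂ - b₁)) ^ 2)
      + (c - b₂) * ((l₁ - b₂) * (l₂ - b₂) / ((b₂ - b₃) * (b₂ - b₁))
        * (P / (l₁ - b₂) + Q / (l₂ - b₂)) ^ 2)
      + (c - b₃) * ((l₁ - b₃) * (l₂ - b₃) / ((b₃ - b₁) * (b₃ - b₂))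
        * (P / (l₁ - b₃) + Q / (l₂ - b₃)) ^ 2) = 0 := by
  have hA := sum_partial_fractions_eq_eval_div_nodal h12 h23 h31
    (f := (C c - X) * (C l₂ - X)) (by compute_degree!) h₁₁ h₁₂ h₁₃
  have hB := sum_partial_fractions_eq_eval_div_nodal h12 h23 h31
    (f := (C c - X) * (C l₁ - X)) (by compute_degree!) h₂₁ h₂₂ h₂₃
  have hC := sum_eval_div_nodal_deriv_eq_zero h12 h23 h31 (f := C c - X) (by compute_degree!)
  simp only [eval_mul, eval_sub, eval_C, eval_X] at hA hB hC
  linear_combination (norm := skip) P ^ 2 * hA + Q ^ 2 * hB + 2 * P * Q * hC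
    + (c - l₁) * (l₂ - l₁) / ((l₁ - b₁) * (l₁ - b₂) * (l₁ - b₃)) * hP
    + (c - l₂) * (l₁ - l₂) / ((l₂ - b₁) * (l₂ - b₂) * (l₂ - b₃)) * hQ
  field_simp
  ring

end ThreeNodes

/-- The square roots are encoded by `u₁² = Φ(l₁)`, `u₂² = Φ(l₂)`, `t₁² = l₁ - c`, `t₂² = l₂ - c`,
with `√(Φ(l₁)(l₂-c)) = u₁t₂` and `√(Φ(l₂)(l₁-c)) = u₂t₁`; this realizes the convention
`√(ab)·√(ac) = a·√(bc)`. -/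
theorem tangency_vector_identities_general (b₁ b₂ b₃ : ℂ)
    (hb12 : b₁ ≠ b₂) (hb23 : b₂ ≠ b₃) (hb31 : b₃ ≠ b₁)
    (l₁ l₂ : ℂ)
    (h₁₁ : l₁ ≠ b₁) (h₁₂ : l₁ ≠ b₂) (h₁₃ : l₁ ≠ b₃)
    (h₂₁ : l₂ ≠ b₁) (h₂₂ : l₂ ≠ b₂) (h₂₃ : l₂ ≠ b₃)
    (c : ℂ) (u₁ u₂ t₁ t₂ : ℂ)
    (hu₁ : u₁ ^ 2 = (l₁ - b₁) * (l₁ - b₂) * (l₁ - b₃))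
    (hu₂ : u₂ ^ 2 = (l₂ - b₁) * (l₂ - b₂) * (l₂ - b₃))
    (ht₁ : t₁ ^ 2 = l₁ - c) (ht₂ : t₂ ^ 2 = l₂ - c)
    (x₁ x₂ x₃ : ℂ)
    (hx₁ : x₁ ^ 2 = (l₁ - b₁) * (l₂ - b₁) / ((b₁ - b₂) * (b₁ - b₃)))
    (hx₂ : x₂ ^ 2 = (l₁ - b₂) * (l₂ - b₂) / ((b₂ - b₃) * (b₂ - b₁)))
    (hx₃ : x₃ ^ 2 = (l₁ - b₃) * (l₂ - b₃) / ((b₃ - b₁) * (b₃ - b₂)))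
    (V₁ V₂ V₃ : ℂ)
    (hV₁ : V₁ = x₁ * (u₁ * t₂ / (l₁ - b₁) + u₂ * t₁ / (l₂ - b₁)))
    (hV₂ : V₂ = x₂ * (u₁ * t₂ / (l₁ - b₂) + u₂ * t₁ / (l₂ - b₂)))
    (hV₃ : V₃ = x₃ * (u₁ * t₂ / (l₁ - b₃) + u₂ * t₁ / (l₂ - b₃))) :
    (c - b₁) * V₁ ^ 2 + (c - b₂) * V₂ ^ 2 + (c - b₃) * V₃ ^ 2 = 0
    ∧ V₁ * x₁ + V₂ * x₂ + V₃ * x₃ = 0 := by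
  constructor
  · rw [hV₁, hV₂, hV₃, mul_pow, mul_pow, mul_pow, hx₁, hx₂, hx₃]
    exact tangency_sum_eq_zero hb12 hb23 hb31 h₁₁ h₁₂ h₁₃ h₂₁ h₂₂ h₂₃ c _ _
      (by rw [mul_pow, hu₁, ht₂]) (by rw [mul_pow, hu₂, ht₁])
  · rw [hV₁, hV₂, hV₃, mul_right_comm x₁, mul_right_comm x₂, mul_right_comm x₃, ← sq, ← sq,
      ← sq, hx₁, hx₂, hx₃]
    exact focal_sum_eq_zero hb12 hb23 hb31 h₁₁ h₁₂ h₁₃ h₂₁ h₂₂ h₂₃ _ _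

/-- The vector `Vᵢ = xᵢ (√(Φ(l₁)(l₂-c))/(l₁-bᵢ) + √(Φ(l₂)(l₁-c))/(l₂-bᵢ))`
satisfies `∑ᵢ (c-bᵢ)Vᵢ² = 0` (tangency to `Q(c)`) and `∑ᵢ Vᵢxᵢ = 0`
(passing through the focus).  The square roots are encoded by auxiliary
variables `u₁² = Φ(l₁)`, `u₂² = Φ(l₂)`, `t₁² = l₁-c`, `t₂² = l₂-c`, so that
`√(Φ(l₁)(l₂-c)) = u₁t₂` and `√(Φ(l₂)(l₁-c)) = u₂t₁`, realizing the convention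
`√(ab)·√(ac) = a·√(bc)`. -/
theorem tangency_vector_identities (b₁ b₂ b₃ : ℂ)
    (hb12 : b₁ ≠ b₂) (hb23 : b₂ ≠ b₃) (hb31 : b₃ ≠ b₁)
    (l₁ l₂ : ℂ) (hl : l₁ ≠ l₂)
    (h₁₁ : l₁ ≠ b₁) (h₁₂ : l₁ ≠ b₂) (h₁₃ : l₁ ≠ b₃)
    (h₂₁ : l₂ ≠ b₁) (h₂₂ : l₂ ≠ b₂) (h₂₃ : l₂ ≠ b₃)
    (c : ℂ) (u₁ u₂ t₁ t₂ : ℂ)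
    (hu₁ : u₁ ^ 2 = (l₁ - b₁) * (l₁ - b₂) * (l₁ - b₃))
    (hu₂ : u₂ ^ 2 = (l₂ - b₁) * (l₂ - b₂) * (l₂ - b₃))
    (ht₁ : t₁ ^ 2 = l₁ - c) (ht₂ : t₂ ^ 2 = l₂ - c)
    (x₁ x₂ x₃ : ℂ)
    (hx₁ : x₁ ^ 2 = (l₁ - b₁) * (l₂ - b₁) / ((b₁ - b₂) * (b₁ - b₃)))
    (hx₂ : x₂ ^ 2 = (l₁ - b₂) * (l₂ - b₂) / ((b₂ - b₃) * (b₂ - b₁)))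
    (hx₃ : x₃ ^ 2 = (l₁ - b₃) * (l₂ - b₃) / ((b₃ - b₁) * (b₃ - b₂)))
    (V₁ V₂ V₃ : ℂ)
    (hV₁ : V₁ = x₁ * (u₁ * t₂ / (l₁ - b₁) + u₂ * t₁ / (l₂ - b₁)))
    (hV₂ : V₂ = x₂ * (u₁ * t₂ / (l₁ - b₂) + u₂ * t₁ / (l₂ - b₂)))
    (hV₃ : V₃ = x₃ * (u₁ * t₂ / (l₁ - b₃) + u₂ * t₁ / (l₂ - b₃))) :
    (c - b₁) * V₁ ^ 2 + (c - b₂) * V₂ ^ 2 + (c - b₃) * V₃ ^ 2 = 0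
    ∧ V₁ * x₁ + V₂ * x₂ + V₃ * x₃ = 0 :=
  tangency_vector_identities_general b₁ b₂ b₃ hb12 hb23 hb31 l₁ l₂ h₁₁ h₁₂ h₁₃ h₂₁ h₂₂ h₂₃ c u₁ u₂
    t₁ t₂ hu₁ hu₂ ht₁ ht₂ x₁ x₂ x₃ hx₁ hx₂ hx₃ V₁ V₂ V₃ hV₁ hV₂ hV₃
end

section
/- Inner products of the tangency vectors: with V_α defined by V_{αi} = x_i(√(Φ(λ_1)(λ_2−c_α))/(λ_1−b_i) + √(Φ(λ_2)(λ_1−c_α))/(λ_2−b_i)), one has ⟨V_α, V_β⟩ = (λ_2−λ_1)(√((λ_2−c_α)(λ_2−c_β)) − √((λ_1−c_α)(λ_1−c_β))) for α ≠ β, and in particular ⟨V_α, V_α⟩ = (λ_1−λ_2)². -/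
/-!
Since `xᵢ² = (λ₁ - bᵢ)(λ₂ - bᵢ)/∏_{j≠i}(bᵢ - bⱼ)`, expanding `⟨V_α, V_β⟩` leaves three weighted
sums over `i`, with denominators `(λ₁ - bᵢ)²`, `(λ₂ - bᵢ)²` and `(λ₁ - bᵢ)(λ₂ - bᵢ)`. The Jacobi
identities `∑ᵢ 1/∏_{j≠i}(bᵢ - bⱼ) = 0` and `∑ᵢ 1/((λ - bᵢ)∏_{j≠i}(bᵢ - bⱼ)) = 1/Φ(λ)` evaluate
them: the mixed sum vanishes and the pure sums are `(λ₂ - λ₁)/Φ(λ₁)` and `(λ₁ - λ₂)/Φ(λ₂)`,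
whose factors `Φ(λₘ)` cancel against `uₘ² = Φ(λₘ)`. On the diagonal, `tₘα² = λₘ - c_α` turns
the result into `(λ₁ - λ₂)²`.
-/

section ThreeNodes

variable {K : Type*} [Field K] {b₁ b₂ b₃ : K}

theorem jacobi_sum_inv_three (hb12 : b₁ ≠ b₂) (hb23 : b₂ ≠ b₃) (hb31 : b₃ ≠ b₁) :
    1 / ((b₁ - b₂) * (b₁ - b₃)) + 1 / ((b₂ - b₃) * (b₂ - b₁))
      + 1 / ((b₃ - b₁) * (b₃ - b₂)) = 0 := by
  field_simp
  ring

theorem partial_fractions_inv_cubic (hb12 : b₁ ≠ b₂) (hb23 : b₂ ≠ b₃) (hb31 : b₃ ≠ b₁)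
    {l : K} (h₁ : l ≠ b₁) (h₂ : l ≠ b₂) (h₃ : l ≠ b₃) :
    1 / ((l - b₁) * ((b₁ - b₂) * (b₁ - b₃))) + 1 / ((l - b₂) * ((b₂ - b₃) * (b₂ - b₁)))
      + 1 / ((l - b₃) * ((b₃ - b₁) * (b₃ - b₂)))
      = 1 / ((l - b₁) * (l - b₂) * (l - b₃)) := by
  field_simp
  ring

variable {b l₁ l₂ D : K}

theorem weight_div_sq_eq (h₁ : l₁ ≠ b) :
    (l₁ - b) * (l₂ - b) / D / (l₁ - b) / (l₁ - b)
      = (l₂ - l₁) * (1 / ((l₁ - b) * D)) + 1 / D := by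
  field_simp
  ring

theorem weight_div_mul_eq (h₁ : l₁ ≠ b) (h₂ : l₂ ≠ b) :
    (l₁ - b) * (l₂ - b) / D / (l₁ - b) / (l₂ - b) = 1 / D := by
  field_simp

theorem sum_weight_div_sq (hb12 : b₁ ≠ b₂) (hb23 : b₂ ≠ b₃) (hb31 : b₃ ≠ b₁)
    (h₁₁ : l₁ ≠ b₁) (h₁₂ : l₁ ≠ b₂) (h₁₃ : l₁ ≠ b₃) :
    (l₁ - b₁) * (l₂ - b₁) / ((b₁ - b₂) * (b₁ - b₃)) / (l₁ - b₁) / (l₁ - b₁)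
      + (l₁ - b₂) * (l₂ - b₂) / ((b₂ - b₃) * (b₂ - b₁)) / (l₁ - b₂) / (l₁ - b₂)
      + (l₁ - b₃) * (l₂ - b₃) / ((b₃ - b₁) * (b₃ - b₂)) / (l₁ - b₃) / (l₁ - b₃)
      = (l₂ - l₁) * (1 / ((l₁ - b₁) * (l₁ - b₂) * (l₁ - b₃))) := by
  rw [weight_div_sq_eq h₁₁, weight_div_sq_eq h₁₂, weight_div_sq_eq h₁₃]
  linear_combination (l₂ - l₁) * partial_fractions_inv_cubic hb12 hb23 hb31 h₁₁ h₁₂ h₁₃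
    + jacobi_sum_inv_three hb12 hb23 hb31

theorem sum_weight_div_mul (hb12 : b₁ ≠ b₂) (hb23 : b₂ ≠ b₃) (hb31 : b₃ ≠ b₁)
    (h₁₁ : l₁ ≠ b₁) (h₁₂ : l₁ ≠ b₂) (h₁₃ : l₁ ≠ b₃)
    (h₂₁ : l₂ ≠ b₁) (h₂₂ : l₂ ≠ b₂) (h₂₃ : l₂ ≠ b₃) :
    (l₁ - b₁) * (l₂ - b₁) / ((b₁ - b₂) * (b₁ - b₃)) / (l₁ - b₁) / (l₂ - b₁)
      + (l₁ - b₂) * (l₂ - b₂) / ((b₂ - b₃) * (b₂ - b₁)) / (l₁ - b₂) / (l₂ - b₂)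
      + (l₁ - b₃) * (l₂ - b₃) / ((b₃ - b₁) * (b₃ - b₂)) / (l₁ - b₃) / (l₂ - b₃) = 0 := by
  rw [weight_div_mul_eq h₁₁ h₂₁, weight_div_mul_eq h₁₂ h₂₂, weight_div_mul_eq h₁₃ h₂₃]
  exact jacobi_sum_inv_three hb12 hb23 hb31

theorem sum_tangency_vector_mul {u₁ u₂ x₁ x₂ x₃ : K}
    (hb12 : b₁ ≠ b₂) (hb23 : b₂ ≠ b₃) (hb31 : b₃ ≠ b₁)
    (h₁₁ : l₁ ≠ b₁) (h₁₂ : l₁ ≠ b₂) (h₁₃ : l₁ ≠ b₃)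
    (h₂₁ : l₂ ≠ b₁) (h₂₂ : l₂ ≠ b₂) (h₂₃ : l₂ ≠ b₃)
    (hu₁ : u₁ ^ 2 = (l₁ - b₁) * (l₁ - b₂) * (l₁ - b₃))
    (hu₂ : u₂ ^ 2 = (l₂ - b₁) * (l₂ - b₂) * (l₂ - b₃))
    (hx₁ : x₁ ^ 2 = (l₁ - b₁) * (l₂ - b₁) / ((b₁ - b₂) * (b₁ - b₃)))
    (hx₂ : x₂ ^ 2 = (l₁ - b₂) * (l₂ - b₂) / ((b₂ - b₃) * (b₂ - b₁)))
    (hx₃ : x₃ ^ 2 = (l₁ - b₃) * (l₂ - b₃) / ((b₃ - b₁) * (b₃ - b₂)))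
    (p q p' q' : K) :
    x₁ * (u₁ * p / (l₁ - b₁) + u₂ * q / (l₂ - b₁))
          * (x₁ * (u₁ * p' / (l₁ - b₁) + u₂ * q' / (l₂ - b₁)))
      + x₂ * (u₁ * p / (l₁ - b₂) + u₂ * q / (l₂ - b₂))
          * (x₂ * (u₁ * p' / (l₁ - b₂) + u₂ * q' / (l₂ - b₂)))
      + x₃ * (u₁ * p / (l₁ - b₃) + u₂ * q / (l₂ - b₃))
          * (x₃ * (u₁ * p' / (l₁ - b₃) + u₂ * q' / (l₂ - b₃)))
      = (l₂ - l₁) * (p * p' - q * q') := by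
  have pole₁ := sum_weight_div_sq hb12 hb23 hb31 (l₂ := l₂) h₁₁ h₁₂ h₁₃
  have pole₂ := sum_weight_div_sq hb12 hb23 hb31 (l₂ := l₁) h₂₁ h₂₂ h₂₃
  have mixed := sum_weight_div_mul hb12 hb23 hb31 h₁₁ h₁₂ h₁₃ h₂₁ h₂₂ h₂₃
  have cancel₁ : u₁ ^ 2 * (1 / ((l₁ - b₁) * (l₁ - b₂) * (l₁ - b₃))) = 1 := by
    rw [hu₁]
    exact mul_one_div_cancel (by simp [sub_eq_zero, h₁₁, h₁₂, h₁₃])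
  have cancel₂ : u₂ ^ 2 * (1 / ((l₂ - b₁) * (l₂ - b₂) * (l₂ - b₃))) = 1 := by
    rw [hu₂]
    exact mul_one_div_cancel (by simp [sub_eq_zero, h₂₁, h₂₂, h₂₃])
  calc _ = u₁ ^ 2 * (p * p') * (x₁ ^ 2 / (l₁ - b₁) / (l₁ - b₁)
        + x₂ ^ 2 / (l₁ - b₂) / (l₁ - b₂) + x₃ ^ 2 / (l₁ - b₃) / (l₁ - b₃))
      + u₂ ^ 2 * (q * q') * (x₁ ^ 2 / (l₂ - b₁) / (l₂ - b₁)
        + x₂ ^ 2 / (l₂ - b₂) / (l₂ - b₂) + x₃ ^ 2 / (l₂ - b₃) / (l₂ - b₃))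
      + u₁ * u₂ * (p * q' + q * p') * (x₁ ^ 2 / (l₁ - b₁) / (l₂ - b₁)
        + x₂ ^ 2 / (l₁ - b₂) / (l₂ - b₂) + x₃ ^ 2 / (l₁ - b₃) / (l₂ - b₃)) := by ring
    _ = (l₂ - l₁) * (p * p' - q * q') := by
      rw [hx₁, hx₂, hx₃]
      linear_combination u₁ ^ 2 * (p * p') * pole₁ + u₂ ^ 2 * (q * q') * pole₂
        + u₁ * u₂ * (p * q' + q * p') * mixed
        + (l₂ - l₁) * (p * p') * cancel₁ - (l₂ - l₁) * (q * q') * cancel₂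

end ThreeNodes

theorem tangency_vectors_inner_products_general (b₁ b₂ b₃ : ℂ)
    (hb12 : b₁ ≠ b₂) (hb23 : b₂ ≠ b₃) (hb31 : b₃ ≠ b₁)
    (l₁ l₂ : ℂ)
    (h₁₁ : l₁ ≠ b₁) (h₁₂ : l₁ ≠ b₂) (h₁₃ : l₁ ≠ b₃)
    (h₂₁ : l₂ ≠ b₁) (h₂₂ : l₂ ≠ b₂) (h₂₃ : l₂ ≠ b₃)
    (c : Fin 3 → ℂ) (u₁ u₂ : ℂ) (t : Fin 2 → Fin 3 → ℂ)
    (hu₁ : u₁ ^ 2 = (l₁ - b₁) * (l₁ - b₂) * (l₁ - b₃))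
    (hu₂ : u₂ ^ 2 = (l₂ - b₁) * (l₂ - b₂) * (l₂ - b₃))
    (ht₁ : ∀ α, (t 0 α) ^ 2 = l₁ - c α)
    (ht₂ : ∀ α, (t 1 α) ^ 2 = l₂ - c α)
    (x₁ x₂ x₃ : ℂ)
    (hx₁ : x₁ ^ 2 = (l₁ - b₁) * (l₂ - b₁) / ((b₁ - b₂) * (b₁ - b₃)))
    (hx₂ : x₂ ^ 2 = (l₁ - b₂) * (l₂ - b₂) / ((b₂ - b₃) * (b₂ - b₁)))
    (hx₃ : x₃ ^ 2 = (l₁ - b₃) * (l₂ - b₃) / ((b₃ - b₁) * (b₃ - b₂)))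
    (V : Fin 3 → Fin 3 → ℂ)
    (hV : ∀ α, V α = fun i =>
      (![x₁, x₂, x₃] i) * (u₁ * t 1 α / (l₁ - ![b₁, b₂, b₃] i)
        + u₂ * t 0 α / (l₂ - ![b₁, b₂, b₃] i))) :
    (∀ α β, α ≠ β →
      ∑ i, V α i * V β i = (l₂ - l₁) * (t 1 α * t 1 β - t 0 α * t 0 β))
    ∧ ∀ α, ∑ i, V α i * V α i = (l₁ - l₂) ^ 2 := by
  have inner_eq : ∀ α β, ∑ i, V α i * V β i
      = (l₂ - l₁) * (t 1 α * t 1 β - t 0 α * t 0 β) := by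
    intro α β
    simp only [hV, Fin.sum_univ_three, Matrix.cons_val_zero, Matrix.cons_val_one,
      Matrix.cons_val_two, Matrix.head_cons, Matrix.tail_cons]
    exact sum_tangency_vector_mul hb12 hb23 hb31 h₁₁ h₁₂ h₁₃ h₂₁ h₂₂ h₂₃ hu₁ hu₂
      hx₁ hx₂ hx₃ _ _ _ _
  refine ⟨fun α β _ => inner_eq α β, fun α => ?_⟩
  linear_combination inner_eq α α + (l₂ - l₁) * ht₂ α - (l₂ - l₁) * ht₁ α

/-- Inner products of the tangency vectors: with
`V_{αi} = xᵢ (√(Φ(l₁)(l₂-c_α))/(l₁-bᵢ) + √(Φ(l₂)(l₁-c_α))/(l₂-bᵢ))`, one has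
`⟨V_α,V_β⟩ = (l₂-l₁)(√((l₂-c_α)(l₂-c_β)) - √((l₁-c_α)(l₁-c_β)))` for `α ≠ β`,
and `⟨V_α,V_α⟩ = (l₁-l₂)²`.  Square roots are encoded by `u_m² = Φ(λ_m)` and
`t_{mα}² = λ_m - c_α`, with `√(Φ(λ_m)(λ_{m'}-c_α)) = u_m t_{m'α}` and
`√((λ_m-c_α)(λ_m-c_β)) = t_{mα} t_{mβ}` (the convention `√(ab)·√(ac) = a·√(bc)`). -/
theorem tangency_vectors_inner_products (b₁ b₂ b₃ : ℂ)
    (hb12 : b₁ ≠ b₂) (hb23 : b₂ ≠ b₃) (hb31 : b₃ ≠ b₁)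
    (l₁ l₂ : ℂ) (hl : l₁ ≠ l₂)
    (h₁₁ : l₁ ≠ b₁) (h₁₂ : l₁ ≠ b₂) (h₁₃ : l₁ ≠ b₃)
    (h₂₁ : l₂ ≠ b₁) (h₂₂ : l₂ ≠ b₂) (h₂₃ : l₂ ≠ b₃)
    (c : Fin 3 → ℂ) (u₁ u₂ : ℂ) (t : Fin 2 → Fin 3 → ℂ)
    (hu₁ : u₁ ^ 2 = (l₁ - b₁) * (l₁ - b₂) * (l₁ - b₃))
    (hu₂ : u₂ ^ 2 = (l₂ - b₁) * (l₂ - b₂) * (l₂ - b₃))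
    (ht₁ : ∀ α, (t 0 α) ^ 2 = l₁ - c α)
    (ht₂ : ∀ α, (t 1 α) ^ 2 = l₂ - c α)
    (x₁ x₂ x₃ : ℂ)
    (hx₁ : x₁ ^ 2 = (l₁ - b₁) * (l₂ - b₁) / ((b₁ - b₂) * (b₁ - b₃)))
    (hx₂ : x₂ ^ 2 = (l₁ - b₂) * (l₂ - b₂) / ((b₂ - b₃) * (b₂ - b₁)))
    (hx₃ : x₃ ^ 2 = (l₁ - b₃) * (l₂ - b₃) / ((b₃ - b₁) * (b₃ - b₂)))
    (V : Fin 3 → Fin 3 → ℂ)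
    (hV : ∀ α, V α = fun i =>
      (![x₁, x₂, x₃] i) * (u₁ * t 1 α / (l₁ - ![b₁, b₂, b₃] i)
        + u₂ * t 0 α / (l₂ - ![b₁, b₂, b₃] i))) :
    (∀ α β, α ≠ β →
      ∑ i, V α i * V β i = (l₂ - l₁) * (t 1 α * t 1 β - t 0 α * t 0 β))
    ∧ ∀ α, ∑ i, V α i * V α i = (l₁ - l₂) ^ 2 :=
  tangency_vectors_inner_products_general b₁ b₂ b₃ hb12 hb23 hb31 l₁ l₂ h₁₁ h₁₂ h₁₃ h₂₁ h₂₂ h₂₃ c u₁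
    u₂ t hu₁ hu₂ ht₁ ht₂ x₁ x₂ x₃ hx₁ hx₂ hx₃ V hV
end

section
/- Full-square identity: |c_1Σ_1V_1 + c_2Σ_2V_2 + c_3Σ_3V_3|² = x_1²(λ_1−λ_2)⁴ (Σ_{α} (c_β−c_γ)√(−(λ_1−c_α)(λ_2−c_α)))², where Σ_α = (λ_1−λ_2)x_1(√(−(λ_1−c_γ)(λ_2−c_β)) − √(−(λ_1−c_β)(λ_2−c_γ))) and the inner products ⟨V_α,V_β⟩ = (λ_2−λ_1)(√((λ_2−c_α)(λ_2−c_β)) − √((λ_1−c_α)(λ_1−c_β))), ⟨V_α,V_α⟩ = (λ_1−λ_2)². -/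
/-!
Put `p_α = s_{1α}`, `q_α = s_{2α}` and `d = λ₁ - λ₂`, so that `q_α² - p_α² = d`. Then the Gram
matrix of the `V_α` is `d (q qᵀ - p pᵀ)`; on the diagonal this is exactly `⟨V_α, V_α⟩ = d²`.
Hence `|∑ a_α V_α|² = d ((a·q)² - (a·p)²)`, and `Σ_α = -i d x₁ (p × q)_α`. What is left only
involves the points `(p_α, q_α)` of the hyperbola `q² - p² = d`, which is rationally
parametrised by `u = q + p`: `p = (u - d/u)/2`, `q = (u + d/u)/2`. After this substitution the
identity is one between rational functions of `u₁, u₂, u₃, d, λ₁`.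
-/

open Complex Finset Matrix

theorem cross_apply_cyclic {R : Type*} [CommRing R] (p q : Fin 3 → R) (α : Fin 3) :
    (p ⨯₃ q) α = p (α + 1) * q (α + 2) - p (α + 2) * q (α + 1) := by
  fin_cases α <;> simp [cross_apply]

theorem sum_mul_self_sum_mul {ι κ R : Type*} [Fintype ι] [Fintype κ] [CommSemiring R]
    (a : ι → R) (V : ι → κ → R) :
    ∑ i, (∑ α, a α * V α i) * (∑ β, a β * V β i)
      = ∑ α, ∑ β, a α * a β * ∑ i, V α i * V β i := by
  simp only [sum_mul, mul_sum]
  rw [sum_comm]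
  refine sum_congr rfl fun α _ => ?_
  rw [sum_comm]
  exact sum_congr rfl fun β _ => sum_congr rfl fun i _ => by ring

theorem sum_mul_self_sum_mul_of_gram {ι κ R : Type*} [Fintype ι] [Fintype κ] [CommRing R]
    {V : ι → κ → R} {p q : ι → R} {d : R}
    (hV : ∀ α β, ∑ i, V α i * V β i = d * (q α * q β - p α * p β)) (a : ι → R) :
    ∑ i, (∑ α, a α * V α i) * (∑ β, a β * V β i)
      = d * ((∑ α, a α * q α) ^ 2 - (∑ α, a α * p α) ^ 2) := by
  rw [sum_mul_self_sum_mul, sq, sq, sum_mul_sum, sum_mul_sum, ← sum_sub_distrib, mul_sum]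
  simp only [hV, ← sum_sub_distrib, mul_sum]
  exact sum_congr rfl fun α _ => sum_congr rfl fun β _ => by ring

theorem exists_eq_hyperbola_param {K : Type*} [Field K] [NeZero (2 : K)] {p q d : K}
    (hd : d ≠ 0) (h : q ^ 2 = p ^ 2 + d) :
    ∃ u ≠ 0, p = (u - d / u) / 2 ∧ q = (u + d / u) / 2 := by
  have hu : (q + p) * (q - p) = d := by linear_combination h
  have hu0 : q + p ≠ 0 := left_ne_zero_of_mul (hu ▸ hd)
  have hv : d / (q + p) = q - p := by rw [← hu, mul_div_cancel_left₀ _ hu0]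
  refine ⟨q + p, hu0, ?_, ?_⟩ <;> rw [hv] <;> field_simp <;> ring

theorem sq_sub_sq_sum_mul_cross {K : Type*} [Field K] [NeZero (2 : K)] (p q c : Fin 3 → K)
    (d e : K) (hd : d ≠ 0) (hpq : ∀ α, q α ^ 2 = p α ^ 2 + d) (hc : ∀ α, c α = p α ^ 2 + e) :
    (∑ α, c α * (p ⨯₃ q) α * q α) ^ 2 - (∑ α, c α * (p ⨯₃ q) α * p α) ^ 2
      = d * (∑ α, (c (α + 1) - c (α + 2)) * (p α * q α)) ^ 2 := by
  simp only [Fin.sum_univ_three, Fin.reduceAdd, cross_apply, Matrix.cons_val]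
  choose u hu hp hq using fun α => exists_eq_hyperbola_param hd (hpq α)
  obtain rfl : c = _ := funext hc
  obtain rfl : p = _ := funext hp
  obtain rfl : q = _ := funext hq
  field_simp [hu 0, hu 1, hu 2]
  ring

theorem full_square_identity_general (c : Fin 3 → ℂ)
    (l₁ l₂ : ℂ) (hl : l₁ ≠ l₂) (x₁ : ℂ)
    (s : Fin 2 → Fin 3 → ℂ)
    (hs₁ : ∀ α, (s 0 α) ^ 2 = -(l₁ - c α))
    (hs₂ : ∀ α, (s 1 α) ^ 2 = -(l₂ - c α))
    (V : Fin 3 → Fin 3 → ℂ)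
    (hVoff : ∀ α β, α ≠ β → ∑ i, V α i * V β i =
      (l₂ - l₁) * ((-(s 1 α * s 1 β)) - (-(s 0 α * s 0 β))))
    (hVdiag : ∀ α, ∑ i, V α i * V α i = (l₁ - l₂) ^ 2)
    (Sg : Fin 3 → ℂ)
    (hSg : ∀ α, Sg α = (l₁ - l₂) * x₁ *
      (I * s 0 (α + 2) * s 1 (α + 1) - I * s 0 (α + 1) * s 1 (α + 2)))
    (W : Fin 3 → ℂ)
    (hW : W = fun i => ∑ α, c α * Sg α * V α i) :
    ∑ i, W i * W i =
      x₁ ^ 2 * (l₁ - l₂) ^ 4 *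
        (∑ α, (c (α + 1) - c (α + 2)) * (I * s 0 α * s 1 α)) ^ 2 := by
  have hsq : ∀ α, s 1 α ^ 2 = s 0 α ^ 2 + (l₁ - l₂) := fun α => by
    linear_combination hs₂ α - hs₁ α
  have hgram : ∀ α β, ∑ i, V α i * V β i = (l₁ - l₂) * (s 1 α * s 1 β - s 0 α * s 0 β) := by
    intro α β
    rcases eq_or_ne α β with rfl | hne
    · linear_combination hVdiag α - (l₁ - l₂) * hsq α
    · linear_combination hVoff α β hne
  have hSg_sum : ∀ t : Fin 3 → ℂ, ∑ α, c α * Sg α * t α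
      = -((l₁ - l₂) * x₁ * I) * ∑ α, c α * (s 0 ⨯₃ s 1) α * t α := fun t => by
    rw [mul_sum]
    exact sum_congr rfl fun α _ => by rw [hSg, cross_apply_cyclic]; ring
  have hI_sum : ∑ α, (c (α + 1) - c (α + 2)) * (I * s 0 α * s 1 α)
      = I * ∑ α, (c (α + 1) - c (α + 2)) * (s 0 α * s 1 α) := by
    rw [mul_sum]
    exact sum_congr rfl fun α _ => by ring
  have hcross := sq_sub_sq_sum_mul_cross (s 0) (s 1) c (l₁ - l₂) l₁ (sub_ne_zero.2 hl) hsq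
    fun α => by linear_combination -hs₁ α
  subst hW
  rw [sum_mul_self_sum_mul_of_gram hgram, hSg_sum, hSg_sum, hI_sum]
  linear_combination ((l₁ - l₂) ^ 3 * x₁ ^ 2 * I ^ 2) * hcross

/-- Full-square identity:
`|c₁Σ₁V₁ + c₂Σ₂V₂ + c₃Σ₃V₃|² = x₁²(l₁-l₂)⁴ (∑_α (c_β-c_γ)√(-(l₁-c_α)(l₂-c_α)))²`,
where `Σ_α = (l₁-l₂)x₁(√(-(l₁-c_γ)(l₂-c_β)) - √(-(l₁-c_β)(l₂-c_γ)))` and the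
inner products of the `V_α` are the ones of the tangency vectors.  Square roots
are encoded in the ring extension with `s_{mα}² = -(λ_m - c_α)`, so that
`√(-(λ_m - c_α)(λ_{m'} - c_β)) = I s_{mα} s_{m'β}` (for `m ≠ m'`),
`√(-(l₁-c_α)(l₂-c_α)) = I s_{1α} s_{2α}` and
`√((λ_m-c_α)(λ_m-c_β)) = -s_{mα} s_{mβ}`, per the symbolic convention
`√(ab)·√(ac) = a·√(bc)`. -/
theorem full_square_identity (c : Fin 3 → ℂ)
    (hc : ∀ α β : Fin 3, α ≠ β → c α ≠ c β)
    (l₁ l₂ : ℂ) (hl : l₁ ≠ l₂) (x₁ : ℂ)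
    (s : Fin 2 → Fin 3 → ℂ)
    (hs₁ : ∀ α, (s 0 α) ^ 2 = -(l₁ - c α))
    (hs₂ : ∀ α, (s 1 α) ^ 2 = -(l₂ - c α))
    (V : Fin 3 → Fin 3 → ℂ)
    (hVoff : ∀ α β, α ≠ β → ∑ i, V α i * V β i =
      (l₂ - l₁) * ((-(s 1 α * s 1 β)) - (-(s 0 α * s 0 β))))
    (hVdiag : ∀ α, ∑ i, V α i * V α i = (l₁ - l₂) ^ 2)
    (Sg : Fin 3 → ℂ)
    (hSg : ∀ α, Sg α = (l₁ - l₂) * x₁ *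
      (I * s 0 (α + 2) * s 1 (α + 1) - I * s 0 (α + 1) * s 1 (α + 2)))
    (W : Fin 3 → ℂ)
    (hW : W = fun i => ∑ α, c α * Sg α * V α i) :
    ∑ i, W i * W i =
      x₁ ^ 2 * (l₁ - l₂) ^ 4 *
        (∑ α, (c (α + 1) - c (α + 2)) * (I * s 0 α * s 1 α)) ^ 2 :=
  full_square_identity_general c l₁ l₂ hl x₁ s hs₁ hs₂ V hVoff hVdiag Sg hSg W hW
end

section
/- If b_1 < b_2 < b_3 are real and z,p ∈ ℝ³ with z×p ≠ 0, then the equation Σ_i (z_jp_k − z_kp_j)²/(λ−b_i) = 0 (cyclic indices), equivalently the quadratic numerator polynomial, has two real roots λ_1 ≤ λ_2 satisfying b_1 ≤ λ_1 ≤ b_2 ≤ λ_2 ≤ b_3. -/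
/-!
Write `cᵢ ≥ 0` for the squared components of `z × p`, so that
`N(λ) = c₁(λ - b₂)(λ - b₃) + c₂(λ - b₁)(λ - b₃) + c₃(λ - b₁)(λ - b₂)`.
This is a quadratic with leading coefficient `c₁ + c₂ + c₃ > 0`, and
`N(b₁) = c₁(b₂ - b₁)(b₃ - b₁) ≥ 0`, `N(b₂) = -c₂(b₂ - b₁)(b₃ - b₂) ≤ 0`,
`N(b₃) = c₃(b₃ - b₁)(b₃ - b₂) ≥ 0`. A quadratic with positive leading coefficient that is
nonpositive at `b₂` has real roots `l₁ ≤ b₂ ≤ l₂`, and being nonnegative at `b₁ < l₂` and at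
`b₃ > l₁` forces `b₁ ≤ l₁` and `l₂ ≤ b₃`.
-/

theorem exists_quadratic_factorization_of_nonpos {a b c m : ℝ} (ha : 0 < a)
    (hm : a * m ^ 2 + b * m + c ≤ 0) :
    ∃ l₁ l₂, l₁ ≤ m ∧ m ≤ l₂ ∧ ∀ x, a * x ^ 2 + b * x + c = a * (x - l₁) * (x - l₂) := by
  have hdisc : (2 * a * m + b) ^ 2 ≤ discrim a b c := by
    rw [discrim]; nlinarith
  set s := √(discrim a b c)
  have hs : s ^ 2 = b ^ 2 - 4 * a * c := Real.sq_sqrt ((sq_nonneg _).trans hdisc)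
  have hbound : |2 * a * m + b| ≤ s := Real.abs_le_sqrt hdisc
  refine ⟨(-b - s) / (2 * a), (-b + s) / (2 * a), ?_, ?_, fun x => ?_⟩
  · rw [div_le_iff₀ (by positivity)]
    linarith [neg_abs_le (2 * a * m + b)]
  · rw [le_div_iff₀ (by positivity)]
    linarith [le_abs_self (2 * a * m + b)]
  · field_simp
    linear_combination hs

theorem le_left_root_of_nonneg {a l₁ l₂ u : ℝ} (ha : 0 < a) (hu : u < l₂)
    (h : 0 ≤ a * (u - l₁) * (u - l₂)) : u ≤ l₁ := by
  by_contra! h'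
  nlinarith [mul_pos ha (sub_pos.mpr h')]

theorem right_root_le_of_nonneg {a l₁ l₂ u : ℝ} (ha : 0 < a) (hu : l₁ < u)
    (h : 0 ≤ a * (u - l₁) * (u - l₂)) : l₂ ≤ u := by
  by_contra! h'
  nlinarith [mul_pos ha (sub_pos.mpr hu)]

theorem exists_interlacing_factorization {c₁ c₂ c₃ b₁ b₂ b₃ : ℝ}
    (hc₁ : 0 ≤ c₁) (hc₂ : 0 ≤ c₂) (hc₃ : 0 ≤ c₃) (hc : 0 < c₁ + c₂ + c₃)
    (hb12 : b₁ < b₂) (hb23 : b₂ < b₃) :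
    ∃ l₁ l₂, b₁ ≤ l₁ ∧ l₁ ≤ b₂ ∧ b₂ ≤ l₂ ∧ l₂ ≤ b₃ ∧ ∀ x,
      c₁ * (x - b₂) * (x - b₃) + c₂ * (x - b₁) * (x - b₃) + c₃ * (x - b₁) * (x - b₂)
        = (c₁ + c₂ + c₃) * (x - l₁) * (x - l₂) := by
  set N := fun x => c₁ * (x - b₂) * (x - b₃) + c₂ * (x - b₁) * (x - b₃)
    + c₃ * (x - b₁) * (x - b₂)
  have hquad : ∀ x, N x = (c₁ + c₂ + c₃) * x ^ 2
      + -(c₁ * (b₂ + b₃) + c₂ * (b₁ + b₃) + c₃ * (b₁ + b₂)) * x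
      + (c₁ * b₂ * b₃ + c₂ * b₁ * b₃ + c₃ * b₁ * b₂) := fun x => by ring
  have h₁₂ := sub_nonneg.mpr hb12.le
  have h₂₃ := sub_nonneg.mpr hb23.le
  have h₁₃ := sub_nonneg.mpr (hb12.trans hb23).le
  have hNb₁ : 0 ≤ N b₁ := by
    have : N b₁ = c₁ * (b₂ - b₁) * (b₃ - b₁) := by ring
    rw [this]; exact mul_nonneg (mul_nonneg hc₁ h₁₂) h₁₃
  have hNb₂ : N b₂ ≤ 0 := by
    have : N b₂ = -(c₂ * (b₂ - b₁) * (b₃ - b₂)) := by ring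
    rw [this, neg_nonpos]; exact mul_nonneg (mul_nonneg hc₂ h₁₂) h₂₃
  have hNb₃ : 0 ≤ N b₃ := by
    have : N b₃ = c₃ * (b₃ - b₁) * (b₃ - b₂) := by ring
    rw [this]; exact mul_nonneg (mul_nonneg hc₃ h₁₃) h₂₃
  obtain ⟨l₁, l₂, hl₁, hl₂, hfact⟩ :=
    exists_quadratic_factorization_of_nonpos hc (hquad b₂ ▸ hNb₂)
  rw [hquad, hfact] at hNb₁ hNb₃
  refine ⟨l₁, l₂, le_left_root_of_nonneg hc (hb12.trans_le hl₂) hNb₁, hl₁, hl₂,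
    right_root_le_of_nonneg hc (hl₁.trans_lt hb23) hNb₃, fun x => (hquad x).trans (hfact x)⟩

theorem sq_add_sq_add_sq_pos {u v w : ℝ} (h : (u, v, w) ≠ (0, 0, 0)) :
    0 < u ^ 2 + v ^ 2 + w ^ 2 := by
  contrapose! h
  have hu : u = 0 := by nlinarith [sq_nonneg u, sq_nonneg v, sq_nonneg w]
  have hv : v = 0 := by nlinarith [sq_nonneg u, sq_nonneg v, sq_nonneg w]
  have hw : w = 0 := by nlinarith [sq_nonneg u, sq_nonneg v, sq_nonneg w]
  simp [hu, hv, hw]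

/-- For real `b₁ < b₂ < b₃` and `z, p ∈ ℝ³` with `z × p ≠ 0`, the quadratic
numerator polynomial of `∑ᵢ (z×p)ᵢ²/(λ - bᵢ)` has two real roots `l₁ ≤ l₂`
interlacing the `bᵢ`: `b₁ ≤ l₁ ≤ b₂ ≤ l₂ ≤ b₃`. -/
theorem separating_roots_interlace (b₁ b₂ b₃ : ℝ) (hb12 : b₁ < b₂) (hb23 : b₂ < b₃)
    (z₁ z₂ z₃ p₁ p₂ p₃ : ℝ)
    (hcross : (z₂ * p₃ - z₃ * p₂, z₃ * p₁ - z₁ * p₃, z₁ * p₂ - z₂ * p₁) ≠ (0, 0, 0))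
    (N : ℝ → ℝ)
    (hN : N = fun lam => (z₂ * p₃ - z₃ * p₂) ^ 2 * (lam - b₂) * (lam - b₃)
      + (z₃ * p₁ - z₁ * p₃) ^ 2 * (lam - b₁) * (lam - b₃)
      + (z₁ * p₂ - z₂ * p₁) ^ 2 * (lam - b₁) * (lam - b₂)) :
    ∃ l₁ l₂ : ℝ, l₁ ≤ l₂ ∧ b₁ ≤ l₁ ∧ l₁ ≤ b₂ ∧ b₂ ≤ l₂ ∧ l₂ ≤ b₃ ∧
      N l₁ = 0 ∧ N l₂ = 0 ∧ ∀ lam, N lam = 0 → lam = l₁ ∨ lam = l₂ := by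
  have ha := sq_add_sq_add_sq_pos hcross
  obtain ⟨l₁, l₂, hbl₁, hl₁b, hbl₂, hl₂b, hfact⟩ :=
    exists_interlacing_factorization (sq_nonneg _) (sq_nonneg _) (sq_nonneg _) ha hb12 hb23
  replace hfact : ∀ x, N x = ((z₂ * p₃ - z₃ * p₂) ^ 2 + (z₃ * p₁ - z₁ * p₃) ^ 2
      + (z₁ * p₂ - z₂ * p₁) ^ 2) * (x - l₁) * (x - l₂) := by
    subst hN; exact hfact
  refine ⟨l₁, l₂, hl₁b.trans hbl₂, hbl₁, hl₁b, hbl₂, hl₂b, by simp [hfact], by simp [hfact],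
    fun lam hlam => ?_⟩
  rw [hfact, mul_eq_zero, mul_eq_zero, sub_eq_zero, sub_eq_zero] at hlam
  rcases hlam with (h | h) | h
  · exact absurd h ha.ne'
  · exact .inl h
  · exact .inr h
end
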